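/- arXiv:2306.00142 — 5 statements merged into one kernel-verified Lean document; each statement's English description precedes it below -/
import Mathlib

section
/- Assume the scheme setting with nonnegative initial data u₀ ∈ (L¹ ∩ BV)(ℝ). Then the approximations remain nonnegative: u^n_i ≥ 0 for all i ∈ ℤ and all 0 ≤ n ≤ N. -/
open MeasureTheory

/-- (H2)/(H3)-type regularity: `g` is `C²`, bounded, of bounded variation,
with bounded and Lipschitz first derivative. -/
def SmoothData (g : ℝ → ℝ) : Prop :=
  ContDiff ℝ 2 g ∧ (∃ M, ∀ x, |g x| ≤ M) ∧ BoundedVariationOn g Set.univ ∧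
    (∃ M, ∀ x, |deriv g x| ≤ M) ∧ ∃ L : NNReal, LipschitzWith L (deriv g)

/-- The discrete convolution `c^n_{i+1/2} = Δx Σ_p μ(x_{i+1/2−p}) β(u^n_{p+1/2})`
(indexed by `i`), where `x_{i+1/2-p} = (i-p)Δx + Δx/2` and
`u^n_{p+1/2} = α u^n_p + (1−α) u^n_{p+1}`. -/
noncomputable def cdisc (μ β : ℝ → ℝ) (Δx αc : ℝ) (v : ℤ → ℝ) (i : ℤ) : ℝ :=
  Δx * ∑' p : ℤ, μ (((i - p : ℤ) : ℝ) * Δx + Δx / 2)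
      * β (αc * v p + (1 - αc) * v (p + 1))

/-- The Lax–Friedrichs type numerical flux
`F^n_{i+1/2}(a,b) = ν(c^n_{i+1/2})(f(a)+f(b))/2 − θ(b−a)/(2λ)`. -/
noncomputable def Fnum (f ν μ β : ℝ → ℝ) (lam θ Δx αc : ℝ) (v : ℤ → ℝ) (i : ℤ)
    (a b : ℝ) : ℝ :=
  ν (cdisc μ β Δx αc v i) * (f a + f b) / 2 - θ * (b - a) / (2 * lam)

/-- `u : ℕ → ℤ → ℝ` is the finite volume approximation: `u⁰_i` is the cell average of
`u₀` over `C_i = [x_{i−1/2}, x_{i+1/2})`, and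
`u^{n+1}_i = u^n_i − λ(F^n_{i+1/2}(u^n_i, u^n_{i+1}) − F^n_{i−1/2}(u^n_{i−1}, u^n_i))`
for `0 ≤ n < N`, where `λ = Δt/Δx`. -/
def SchemeHyp (f ν μ β : ℝ → ℝ) (u0 : ℝ → ℝ) (Δx Δt θ αc : ℝ) (N : ℕ)
    (u : ℕ → ℤ → ℝ) : Prop :=
  (∀ i : ℤ, u 0 i
      = (1 / Δx) * ∫ x in Set.Ico ((i : ℝ) * Δx - Δx / 2) ((i : ℝ) * Δx + Δx / 2), u0 x) ∧
  ∀ n < N, ∀ i : ℤ,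
    u (n + 1) i = u n i
      - (Δt / Δx) * (Fnum f ν μ β (Δt / Δx) θ Δx αc (u n) i (u n i) (u n (i + 1))
          - Fnum f ν μ β (Δt / Δx) θ Δx αc (u n) (i - 1) (u n (i - 1)) (u n i))

/-!
Since `f 0 = 0`, `|f x| ≤ Lip(f) x` for `x ≥ 0`. One step of the scheme rewrites as the
Lax–Friedrichs average `(1 - θ) u_i + (θ/2)(u_{i-1} + u_{i+1})` plus a flux term bounded by
`λ ‖ν‖_∞ Lip(f) (u_i + (u_{i-1} + u_{i+1})/2)` on nonnegative data, and the CFL condition gives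
`λ ‖ν‖_∞ Lip(f) ≤ min(θ, 1 - θ)`, so the viscosity absorbs the flux and nonnegativity propagates.
-/

theorem Fnum_step_eq (f ν μ β : ℝ → ℝ) {lam : ℝ} (hlam : lam ≠ 0) (θ Δx αc : ℝ)
    (v : ℤ → ℝ) (i : ℤ) :
    v i - lam * (Fnum f ν μ β lam θ Δx αc v i (v i) (v (i + 1))
        - Fnum f ν μ β lam θ Δx αc v (i - 1) (v (i - 1)) (v i))
      = (1 - θ) * v i + θ / 2 * (v (i - 1) + v (i + 1))
        + lam / 2 * (ν (cdisc μ β Δx αc v (i - 1)) * (f (v (i - 1)) + f (v i))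
          - ν (cdisc μ β Δx αc v i) * (f (v i) + f (v (i + 1)))) := by
  simp only [Fnum]
  field_simp
  ring

theorem abs_mul_add_le_of_lipschitzWith {f : ℝ → ℝ} {L : NNReal} (hf : LipschitzWith L f)
    (hf0 : f 0 = 0) {M p x y : ℝ} (hp : |p| ≤ M) (hx : 0 ≤ x) (hy : 0 ≤ y) :
    |p * (f x + f y)| ≤ M * (L * (x + y)) := by
  have hfx : |f x| ≤ L * x := by simpa [abs_of_nonneg hx] using hf.norm_le_mul hf0 x
  have hfy : |f y| ≤ L * y := by simpa [abs_of_nonneg hy] using hf.norm_le_mul hf0 y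
  rw [abs_mul, mul_add (L : ℝ)]
  exact mul_le_mul hp ((abs_add_le _ _).trans (add_le_add hfx hfy)) (abs_nonneg _)
    ((abs_nonneg p).trans hp)

theorem viscous_average_add_flux_nonneg {f : ℝ → ℝ} {L : NNReal} (hf : LipschitzWith L f)
    (hf0 : f 0 = 0) {M lam θ a b c p q : ℝ} (hp : |p| ≤ M) (hq : |q| ≤ M) (hlam : 0 ≤ lam)
    (hθ : lam * (L * M) ≤ θ) (hθ' : lam * (L * M) ≤ 1 - θ)
    (ha : 0 ≤ a) (hb : 0 ≤ b) (hc : 0 ≤ c) :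
    0 ≤ (1 - θ) * a + θ / 2 * (c + b) + lam / 2 * (q * (f c + f a) - p * (f a + f b)) := by
  have hq' := neg_le_of_abs_le (abs_mul_add_le_of_lipschitzWith hf hf0 hq hc ha)
  have hp' := le_of_abs_le (abs_mul_add_le_of_lipschitzWith hf hf0 hp ha hb)
  have hflux : -(lam / 2) * (M * (L * (c + a)) + M * (L * (a + b)))
      ≤ lam / 2 * (q * (f c + f a) - p * (f a + f b)) := by
    rw [neg_mul, ← mul_neg]
    exact mul_le_mul_of_nonneg_left (by linarith) (by positivity)
  linarith [mul_nonneg (sub_nonneg.2 hθ') ha, mul_nonneg (sub_nonneg.2 hθ) (add_nonneg hb hc)]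

theorem cfl_viscosity_bounds {lam θ L M : ℝ} (hlam : 0 ≤ lam) (hL : 0 ≤ L) (hM : 0 ≤ M)
    (hCFL : lam ≤ min 1 (min (4 - 6 * θ) (6 * θ)) / (1 + 6 * L * M)) :
    lam * (L * M) ≤ θ ∧ lam * (L * M) ≤ 1 - θ := by
  rw [le_div_iff₀ (by positivity)] at hCFL
  have h₁ := hCFL.trans ((min_le_right _ _).trans (min_le_right _ _))
  have h₂ := hCFL.trans ((min_le_right _ _).trans (min_le_left _ _))
  constructor <;> nlinarith

theorem Fnum_step_nonneg {f ν : ℝ → ℝ} (μ β : ℝ → ℝ) {L : NNReal} {M lam θ : ℝ}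
    (hf : LipschitzWith L f) (hf0 : f 0 = 0) (hν : ∀ x, |ν x| ≤ M) (hlam : 0 < lam)
    (hθ : lam * (L * M) ≤ θ) (hθ' : lam * (L * M) ≤ 1 - θ) (Δx αc : ℝ)
    {v : ℤ → ℝ} (hv : ∀ i, 0 ≤ v i) (i : ℤ) :
    0 ≤ v i - lam * (Fnum f ν μ β lam θ Δx αc v i (v i) (v (i + 1))
        - Fnum f ν μ β lam θ Δx αc v (i - 1) (v (i - 1)) (v i)) := by
  rw [Fnum_step_eq f ν μ β hlam.ne' θ Δx αc v i]
  exact viscous_average_add_flux_nonneg hf hf0 (hν _) (hν _) hlam.le hθ hθ' (hv i) (hv _) (hv _)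

theorem stmt2_general (f ν β μ : ℝ → ℝ) (Lf : NNReal) (Mν : ℝ)
    (hf : LipschitzWith Lf f) (hf0 : f 0 = 0)
    (hνb : ∀ x, |ν x| ≤ Mν)
    (Δx Δt θ αc : ℝ) (N : ℕ)
    (hΔx : 0 < Δx) (hΔt : 0 < Δt)
    (hCFL : Δt / Δx ≤ min 1 (min (4 - 6 * θ) (6 * θ)) / (1 + 6 * (Lf : ℝ) * Mν))
    (u0 : ℝ → ℝ)
    (hu0pos : ∀ x, 0 ≤ u0 x)
    (u : ℕ → ℤ → ℝ) (hu : SchemeHyp f ν μ β u0 Δx Δt θ αc N u) :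
    ∀ n ≤ N, ∀ i : ℤ, 0 ≤ u n i := by
  obtain ⟨hinit, hstep⟩ := hu
  have hlam : 0 < Δt / Δx := div_pos hΔt hΔx
  obtain ⟨hθ, hθ'⟩ := cfl_viscosity_bounds hlam.le Lf.coe_nonneg
    ((abs_nonneg _).trans (hνb 0)) hCFL
  intro n hn
  induction n with
  | zero =>
    intro i
    rw [hinit i]
    exact mul_nonneg (by positivity) (setIntegral_nonneg measurableSet_Ico fun x _ => hu0pos x)
  | succ n ih =>
    intro i
    rw [hstep n hn i]
    exact Fnum_step_nonneg μ β hf hf0 hνb hlam hθ hθ' Δx αc (ih (by omega)) i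

/-- Positivity of the scheme: with nonnegative initial data `u₀ ∈ (L¹ ∩ BV)(ℝ)`,
the finite volume approximations satisfy `u^n_i ≥ 0` for all `i ∈ ℤ`, `0 ≤ n ≤ N`. -/
theorem stmt2 (f ν β μ : ℝ → ℝ) (Lf : NNReal) (Mν : ℝ)
    (hf : LipschitzWith Lf f) (hf0 : f 0 = 0)
    (hν : SmoothData ν) (hν0 : ν 0 = 0) (hνb : ∀ x, |ν x| ≤ Mν)
    (hβ : SmoothData β) (hβ0 : β 0 = 0)
    (hμ : SmoothData μ)
    (T Δx Δt θ αc : ℝ) (N : ℕ)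
    (hΔx : 0 < Δx) (hΔt : 0 < Δt) (hT : 0 < T) (hTN : T = N * Δt)
    (hθ : θ ∈ Set.Ioo (0 : ℝ) (2 / 3)) (hαc : αc ∈ Set.Icc (0 : ℝ) 1)
    (hCFL : Δt / Δx ≤ min 1 (min (4 - 6 * θ) (6 * θ)) / (1 + 6 * (Lf : ℝ) * Mν))
    (u0 : ℝ → ℝ) (hu0 : Integrable u0) (hu0bv : BoundedVariationOn u0 Set.univ)
    (hu0pos : ∀ x, 0 ≤ u0 x)
    (u : ℕ → ℤ → ℝ) (hu : SchemeHyp f ν μ β u0 Δx Δt θ αc N u) :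
    ∀ n ≤ N, ∀ i : ℤ, 0 ≤ u n i :=
  stmt2_general f ν β μ Lf Mν hf hf0 hνb Δx Δt θ αc N hΔx hΔt hCFL u0 hu0pos u hu
end

section
/- Assume the scheme setting with nonnegative initial data u₀ ∈ (L¹ ∩ BV)(ℝ). Then the discrete L¹ norm is conserved: Δx Σ_{i∈ℤ} |u^n_i| = Δx Σ_{i∈ℤ} |u⁰_i| for all 0 ≤ n ≤ N. -/
/-!
Since `f(0) = 0` and `f` is Lipschitz, `|f(s)| ≤ Lip(f) |s|`, and the CFL condition makes every
new value `u^{n+1}_i` a combination of `u^n_{i-1}, u^n_i, u^n_{i+1}` with nonnegative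
coefficients; so nonnegativity propagates from `u⁰` and `|u^n_i| = u^n_i`. The scheme is in
conservation form, and the fluxes are summable (they are bounded by `|u^n_i| + |u^n_{i+1}|`),
so the flux differences telescope and `Σ_i u^n_i` is independent of `n`.
-/

open MeasureTheory

theorem summable_integral_cells {g : ℝ → ℝ} (hg : Integrable g) (h : ℝ) :
    Summable fun i : ℤ => ∫ x in Set.Ico ((i : ℝ) * h - h / 2) ((i : ℝ) * h + h / 2), g x := by
  have hcells : (fun i : ℤ => Set.Ico ((i : ℝ) * h - h / 2) ((i : ℝ) * h + h / 2))
      = fun i : ℤ => Set.Ico (-(h / 2) + i • h) (-(h / 2) + (i + 1) • h) := by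
    ext i : 1
    congr 1 <;> simp only [zsmul_eq_mul, Int.cast_add, Int.cast_one] <;> ring
  have hdisj := Set.pairwise_disjoint_Ico_add_zsmul (-(h / 2)) h
  rw [← hcells] at hdisj
  exact (hasSum_integral_iUnion (fun _ => measurableSet_Ico) hdisj hg.integrableOn).summable

theorem tsum_sub_mul_sub_shift {v G : ℤ → ℝ} (hv : Summable v) (hG : Summable G) (c : ℝ) :
    ∑' i, (v i - c * (G i - G (i - 1))) = ∑' i, v i := by
  have hG' : Summable fun i : ℤ => G (i - 1) := (Equiv.subRight (1 : ℤ)).summable_iff.mpr hG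
  have hshift : ∑' i : ℤ, G (i - 1) = ∑' i, G i := (Equiv.subRight (1 : ℤ)).tsum_eq G
  rw [hv.tsum_sub ((hG.sub hG').mul_left c), tsum_mul_left, hG.tsum_sub hG', hshift, sub_self,
    mul_zero, sub_zero]

theorem abs_le_mul_abs_of_lipschitzWith {f : ℝ → ℝ} {L : NNReal} (hf : LipschitzWith L f)
    (hf0 : f 0 = 0) (s : ℝ) : |f s| ≤ L * |s| := by
  simpa [Real.dist_eq, hf0] using hf.dist_le_mul s 0

theorem cfl_bounds {lam θ L M : ℝ} (hlam : 0 < lam) (hL : 0 ≤ L) (hM : 0 ≤ M)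
    (hCFL : lam ≤ min 1 (min (4 - 6 * θ) (6 * θ)) / (1 + 6 * L * M)) :
    lam * (M * L) ≤ θ ∧ lam * (M * L) ≤ 1 - θ := by
  rw [le_div_iff₀ (by positivity)] at hCFL
  have h4 := hCFL.trans ((min_le_right _ _).trans (min_le_left _ _))
  have h6 := hCFL.trans ((min_le_right _ _).trans (min_le_right _ _))
  constructor <;> nlinarith

section Scheme

variable (f ν μ β : ℝ → ℝ) (lam θ Δx αc : ℝ)

noncomputable def numFlux (a : ℤ → ℝ) (i : ℤ) : ℝ :=
  Fnum f ν μ β lam θ Δx αc a i (a i) (a (i + 1))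

noncomputable def schemeStep (a : ℤ → ℝ) (i : ℤ) : ℝ :=
  a i - lam * (numFlux f ν μ β lam θ Δx αc a i - numFlux f ν μ β lam θ Δx αc a (i - 1))

variable {f ν μ β lam θ Δx αc}

theorem SchemeHyp.eq_schemeStep {u0 : ℝ → ℝ} {Δt : ℝ} {N : ℕ} {u : ℕ → ℤ → ℝ}
    (hu : SchemeHyp f ν μ β u0 Δx Δt θ αc N u) {n : ℕ} (hn : n < N) :
    u (n + 1) = schemeStep f ν μ β (Δt / Δx) θ Δx αc (u n) := by
  ext i
  rw [hu.2 n hn i, schemeStep, numFlux, numFlux, sub_add_cancel]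

theorem abs_numFlux_le {L : NNReal} {M : ℝ} (hfL : ∀ s, |f s| ≤ L * |s|)
    (hνM : ∀ x, |ν x| ≤ M) (a : ℤ → ℝ) (i : ℤ) :
    |numFlux f ν μ β lam θ Δx αc a i|
      ≤ (M * L / 2 + |θ / (2 * lam)|) * (|a i| + |a (i + 1)|) := by
  have hM : 0 ≤ M := (abs_nonneg _).trans (hνM 0)
  have hadvection : |ν (cdisc μ β Δx αc a i) * (f (a i) + f (a (i + 1)))|
      ≤ M * (L * (|a i| + |a (i + 1)|)) := by
    rw [abs_mul]
    gcongr
    · exact hνM _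
    · exact (abs_add_le _ _).trans (by linarith [hfL (a i), hfL (a (i + 1))])
  have hdiff :
      |θ / (2 * lam) * (a (i + 1) - a i)| ≤ |θ / (2 * lam)| * (|a i| + |a (i + 1)|) := by
    rw [abs_mul]
    gcongr
    exact (abs_sub _ _).trans_eq (add_comm _ _)
  have hsplit : numFlux f ν μ β lam θ Δx αc a i
      = ν (cdisc μ β Δx αc a i) * (f (a i) + f (a (i + 1))) / 2
        - θ / (2 * lam) * (a (i + 1) - a i) := by
    rw [numFlux, Fnum]; ring
  rw [hsplit]
  refine (abs_sub _ _).trans ?_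
  rw [abs_div, abs_two]
  linarith

theorem summable_numFlux {L : NNReal} {M : ℝ} (hfL : ∀ s, |f s| ≤ L * |s|)
    (hνM : ∀ x, |ν x| ≤ M) {a : ℤ → ℝ} (ha : Summable a) :
    Summable (numFlux f ν μ β lam θ Δx αc a) := by
  have ha1 : Summable fun i : ℤ => |a (i + 1)| :=
    (Equiv.addRight (1 : ℤ)).summable_iff.mpr ha.abs
  exact Summable.of_norm_bounded ((ha.abs.add ha1).mul_left _) (abs_numFlux_le hfL hνM a)

theorem summable_schemeStep {L : NNReal} {M : ℝ} (hfL : ∀ s, |f s| ≤ L * |s|)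
    (hνM : ∀ x, |ν x| ≤ M) {a : ℤ → ℝ} (ha : Summable a) :
    Summable (schemeStep f ν μ β lam θ Δx αc a) := by
  have hG : Summable (numFlux f ν μ β lam θ Δx αc a) := summable_numFlux hfL hνM ha
  have hG' := (Equiv.subRight (1 : ℤ)).summable_iff.mpr hG
  exact ha.sub ((hG.sub hG').mul_left lam)

theorem tsum_schemeStep {L : NNReal} {M : ℝ} (hfL : ∀ s, |f s| ≤ L * |s|)
    (hνM : ∀ x, |ν x| ≤ M) {a : ℤ → ℝ} (ha : Summable a) :
    ∑' i, schemeStep f ν μ β lam θ Δx αc a i = ∑' i, a i :=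
  tsum_sub_mul_sub_shift ha (summable_numFlux hfL hνM ha) lam

theorem schemeStep_nonneg {L : NNReal} {M : ℝ} (hfL : ∀ s, |f s| ≤ L * |s|)
    (hνM : ∀ x, |ν x| ≤ M) (hlam : 0 < lam) (hθ : lam * (M * L) ≤ θ)
    (hθ' : lam * (M * L) ≤ 1 - θ) {a : ℤ → ℝ} (ha : ∀ i, 0 ≤ a i) (i : ℤ) :
    0 ≤ schemeStep f ν μ β lam θ Δx αc a i := by
  set p := a i
  set q := a (i + 1)
  set r := a (i - 1)
  set ν₁ := ν (cdisc μ β Δx αc a i)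
  set ν₂ := ν (cdisc μ β Δx αc a (i - 1))
  have hp : 0 ≤ p := ha i
  have hq : 0 ≤ q := ha (i + 1)
  have hr : 0 ≤ r := ha (i - 1)
  have hf : ∀ j, |f (a j)| ≤ L * a j := fun j => by
    simpa only [abs_of_nonneg (ha j)] using hfL (a j)
  have hexpand : schemeStep f ν μ β lam θ Δx αc a i
      = (1 - θ) * p + θ / 2 * q + θ / 2 * r
        - lam / 2 * (ν₁ * (f p + f q) - ν₂ * (f r + f p)) := by
    rw [schemeStep, numFlux, numFlux, Fnum, Fnum, sub_add_cancel]
    field_simp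
    ring
  have htransport : |ν₁ * (f p + f q) - ν₂ * (f r + f p)| ≤ M * L * (2 * p + q + r) := by
    refine (abs_sub _ _).trans ?_
    rw [abs_mul, abs_mul]
    have h₁ : |ν₁| * |f p + f q| ≤ M * (L * p + L * q) :=
      mul_le_mul (hνM _) ((abs_add_le _ _).trans (add_le_add (hf i) (hf (i + 1))))
        (abs_nonneg _) ((abs_nonneg _).trans (hνM 0))
    have h₂ : |ν₂| * |f r + f p| ≤ M * (L * r + L * p) :=
      mul_le_mul (hνM _) ((abs_add_le _ _).trans (add_le_add (hf (i - 1)) (hf i)))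
        (abs_nonneg _) ((abs_nonneg _).trans (hνM 0))
    linarith
  have hcoeff : lam / 2 * (M * L * (2 * p + q + r)) ≤ (1 - θ) * p + θ / 2 * q + θ / 2 * r := by
    nlinarith [mul_le_mul_of_nonneg_right hθ' hp, mul_le_mul_of_nonneg_right hθ hq,
      mul_le_mul_of_nonneg_right hθ hr]
  rw [hexpand]
  linarith [mul_le_mul_of_nonneg_left ((le_abs_self _).trans htransport)
    (by positivity : 0 ≤ lam / 2)]

end Scheme

theorem stmt4_general (f ν β μ : ℝ → ℝ) (Lf : NNReal) (Mν : ℝ)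
    (hf : LipschitzWith Lf f) (hf0 : f 0 = 0)
    (hνb : ∀ x, |ν x| ≤ Mν)
    (Δx Δt θ αc : ℝ) (N : ℕ)
    (hΔx : 0 < Δx) (hΔt : 0 < Δt)
    (hCFL : Δt / Δx ≤ min 1 (min (4 - 6 * θ) (6 * θ)) / (1 + 6 * (Lf : ℝ) * Mν))
    (u0 : ℝ → ℝ) (hu0 : Integrable u0)
    (hu0pos : ∀ x, 0 ≤ u0 x)
    (u : ℕ → ℤ → ℝ) (hu : SchemeHyp f ν μ β u0 Δx Δt θ αc N u) :
    ∀ n ≤ N, Δx * (∑' i : ℤ, |u n i|) = Δx * ∑' i : ℤ, |u 0 i| := by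
  have hlam : 0 < Δt / Δx := div_pos hΔt hΔx
  have hfL := abs_le_mul_abs_of_lipschitzWith hf hf0
  obtain ⟨hθ, hθ'⟩ := cfl_bounds hlam Lf.coe_nonneg ((abs_nonneg _).trans (hνb 0)) hCFL
  have hnonneg₀ : ∀ i, 0 ≤ u 0 i := fun i => by
    rw [hu.1 i]
    exact mul_nonneg (by positivity) (setIntegral_nonneg measurableSet_Ico fun x _ => hu0pos x)
  have hsum₀ : Summable (u 0) :=
    ((summable_integral_cells hu0 Δx).mul_left (1 / Δx)).congr fun i => (hu.1 i).symm
  have hinv :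
      ∀ n ≤ N, (∀ i, 0 ≤ u n i) ∧ Summable (u n) ∧ ∑' i, u n i = ∑' i, u 0 i := by
    intro n hn
    induction n with
    | zero => exact ⟨hnonneg₀, hsum₀, rfl⟩
    | succ n ih =>
      obtain ⟨hnonneg, hsum, htsum⟩ := ih (by omega)
      rw [hu.eq_schemeStep (by omega : n < N)]
      exact ⟨schemeStep_nonneg hfL hνb hlam hθ hθ' hnonneg, summable_schemeStep hfL hνb hsum,
        (tsum_schemeStep hfL hνb hsum).trans htsum⟩
  intro n hn
  obtain ⟨hnonneg, -, htsum⟩ := hinv n hn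
  simp_rw [abs_of_nonneg (hnonneg _), abs_of_nonneg (hnonneg₀ _), htsum]

/-- `L¹` conservation: `Δx Σ_i |u^n_i| = Δx Σ_i |u⁰_i|` for all `0 ≤ n ≤ N`. -/
theorem stmt4 (f ν β μ : ℝ → ℝ) (Lf : NNReal) (Mν : ℝ)
    (hf : LipschitzWith Lf f) (hf0 : f 0 = 0)
    (hν : SmoothData ν) (hν0 : ν 0 = 0) (hνb : ∀ x, |ν x| ≤ Mν)
    (hβ : SmoothData β) (hβ0 : β 0 = 0)
    (hμ : SmoothData μ)
    (T Δx Δt θ αc : ℝ) (N : ℕ)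
    (hΔx : 0 < Δx) (hΔt : 0 < Δt) (hT : 0 < T) (hTN : T = N * Δt)
    (hθ : θ ∈ Set.Ioo (0 : ℝ) (2 / 3)) (hαc : αc ∈ Set.Icc (0 : ℝ) 1)
    (hCFL : Δt / Δx ≤ min 1 (min (4 - 6 * θ) (6 * θ)) / (1 + 6 * (Lf : ℝ) * Mν))
    (u0 : ℝ → ℝ) (hu0 : Integrable u0) (hu0bv : BoundedVariationOn u0 Set.univ)
    (hu0pos : ∀ x, 0 ≤ u0 x)
    (u : ℕ → ℤ → ℝ) (hu : SchemeHyp f ν μ β u0 Δx Δt θ αc N u) :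
    ∀ n ≤ N, Δx * (∑' i : ℤ, |u n i|) = Δx * ∑' i : ℤ, |u 0 i| :=
  stmt4_general f ν β μ Lf Mν hf hf0 hνb Δx Δt θ αc N hΔx hΔt hCFL u0 hu0 hu0pos u hu
end

section
/- Assume the scheme setting with nonnegative initial data u₀ ∈ (L¹ ∩ BV)(ℝ). Then there exists a constant L₂ > 0, depending only on f, ν, β, μ, ‖u₀‖_{L¹(ℝ)} and T but not on Δx or Δt, such that the discrete total variation satisfies Σ_{i∈ℤ} |u^n_{i+1} − u^n_i| ≤ exp(L₂ T) ( Σ_{i∈ℤ} |u⁰_{i+1} − u⁰_i| + L₂ ) for all 0 ≤ n ≤ N. -/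
open MeasureTheory

/-!
With `w = u^n` and `n_i = ν(c^n_{i+1/2})`, one step of the scheme reads
`w'_i = (1-θ) w_i + θ/2 (w_{i+1} + w_{i-1}) - λ/2 (H_i - H_{i-1})`,
`H_i = n_i (f(w_i) + f(w_{i+1}))`. Under the CFL condition the step preserves nonnegativity and
is conservative, so every `u^n` is nonnegative with `Δx Σ_i u^n_i ≤ ‖u₀‖_{L¹}`. Differencing the
step gives, with `v_j = w_{j+1} - w_j` and `d_i = n_{i+1} - n_i`,
`w'_{i+1} - w'_i = (1-θ) v_i + X_{i+1} + Y_{i-1} - λ (d_i f(w_{i+1}) - d_{i-1} f(w_i))`,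
where `X_j, Y_j = θ/2 v_j ∓ λ/2 n_j (f(w_{j+1}) - f(w_j))`.
The CFL condition gives `|X_j| + |Y_j| = θ |v_j|`, and since `μ'` is Lipschitz the first and
second differences of `n` are `O(Δx)` and `O(Δx²)` as long as the mass `Δx Σ_i |w_i|` is bounded.
Summing over `i` yields `TV(u^{n+1}) ≤ (1 + C Δt) TV(u^n) + C Δt` with `C` depending only on the
data and `‖u₀‖_{L¹}`, and a discrete Grönwall argument concludes.
-/

open Set

lemma LipschitzWith.abs_sub_le {f : ℝ → ℝ} {K : NNReal} (hf : LipschitzWith K f) (x y : ℝ) :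
    |f x - f y| ≤ K * |x - y| := by
  simpa only [Real.dist_eq] using hf.dist_le_mul x y

lemma LipschitzWith.abs_le_of_map_zero {f : ℝ → ℝ} {K : NNReal} (hf : LipschitzWith K f)
    (hf0 : f 0 = 0) (x : ℝ) : |f x| ≤ K * |x| := by
  simpa only [hf0, sub_zero] using hf.abs_sub_le x 0

section Shift

variable {G M : Type*} [AddGroup G] [AddCommMonoid M] [TopologicalSpace M] {g : G → M} {a : M}

lemma HasSum.comp_add_right (hg : HasSum g a) (k : G) : HasSum (fun i => g (i + k)) a :=
  (Equiv.addRight k).hasSum_iff.2 hg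

lemma HasSum.comp_sub_right (hg : HasSum g a) (k : G) : HasSum (fun i => g (i - k)) a :=
  (Equiv.subRight k).hasSum_iff.2 hg

lemma Summable.comp_add_right (hg : Summable g) (k : G) : Summable (fun i => g (i + k)) :=
  (hg.hasSum.comp_add_right k).summable

end Shift

lemma Summable.mul_of_abs_le {ι : Type*} {m b : ι → ℝ} {B : ℝ} (hb : Summable b)
    (hm : ∀ p, |m p| ≤ B) : Summable (fun p => m p * b p) :=
  (hb.abs.mul_left B).of_norm_bounded fun p => by
    rw [Real.norm_eq_abs, abs_mul]
    exact mul_le_mul_of_nonneg_right (hm p) (abs_nonneg _)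

lemma abs_sub_add_abs_add_of_abs_le {x q : ℝ} (h : |q| ≤ |x|) : |x - q| + |x + q| = 2 * |x| := by
  rcases le_total 0 x with hx | hx
  · obtain ⟨h₁, h₂⟩ := abs_le.1 (h.trans_eq (abs_of_nonneg hx))
    rw [abs_of_nonneg hx, abs_of_nonneg (by linarith), abs_of_nonneg (by linarith)]
    ring
  · obtain ⟨h₁, h₂⟩ := abs_le.1 (h.trans_eq (abs_of_nonpos hx))
    rw [abs_of_nonpos hx, abs_of_nonpos (by linarith), abs_of_nonpos (by linarith)]
    ring

lemma add_one_le_exp_mul_of_le_one_add_mul_add {x : ℕ → ℝ} {a : ℝ} {N : ℕ} (ha : 0 ≤ a)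
    (hx0 : 0 ≤ x 0) (hx : ∀ k < N, x (k + 1) ≤ (1 + a) * x k + a) {n : ℕ} (hn : n ≤ N) :
    x n + 1 ≤ Real.exp (n * a) * (x 0 + 1) := by
  induction n with
  | zero => simp
  | succ k ih =>
    calc x (k + 1) + 1 ≤ (1 + a) * (x k + 1) := by linarith [hx k hn]
      _ ≤ (1 + a) * (Real.exp (k * a) * (x 0 + 1)) := by gcongr; exact ih (by omega)
      _ ≤ Real.exp a * (Real.exp (k * a) * (x 0 + 1)) := by
        gcongr
        linarith [Real.add_one_le_exp a]
      _ = Real.exp ((k + 1 : ℕ) * a) * (x 0 + 1) := by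
        rw [← mul_assoc, ← Real.exp_add]
        push_cast
        congr 2
        ring

section SecondOrder

variable {g : ℝ → ℝ} {L : NNReal}

lemma abs_sub_sub_mul_deriv_le (hg : Differentiable ℝ g) (hL : LipschitzWith L (deriv g))
    (x y : ℝ) : |g y - g x - (y - x) * deriv g x| ≤ L * (y - x) ^ 2 := by
  have hbound : ∀ t ∈ uIcc x y, ‖deriv g t - deriv g x‖ ≤ L * |y - x| := fun t ht => by
    rw [Real.norm_eq_abs]
    refine (hL.abs_sub_le t x).trans (mul_le_mul_of_nonneg_left ?_ L.2)
    exact abs_sub_left_of_mem_uIcc ht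
  have hderiv : ∀ t ∈ uIcc x y,
      HasDerivWithinAt (fun t => g t - deriv g x * t) (deriv g t - deriv g x) (uIcc x y) t :=
    fun t _ =>
      ((hg t).hasDerivAt.sub ((hasDerivAt_id t).const_mul _)).hasDerivWithinAt.congr_deriv
        (by rw [mul_one])
  have := (convex_uIcc x y).norm_image_sub_le_of_norm_hasDerivWithin_le hderiv hbound
    left_mem_uIcc right_mem_uIcc
  rw [Real.norm_eq_abs, Real.norm_eq_abs, mul_assoc, abs_mul_abs_self, ← sq] at this
  convert this using 2
  ring

lemma abs_second_diff_le (hg : Differentiable ℝ g) (hL : LipschitzWith L (deriv g)) (x y z : ℝ) :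
    |g z - 2 * g y + g x| ≤ L * ((z - y) ^ 2 + (x - y) ^ 2) + |deriv g y| * |z - 2 * y + x| := by
  have hz := abs_sub_sub_mul_deriv_le hg hL y z
  have hx := abs_sub_sub_mul_deriv_le hg hL y x
  calc |g z - 2 * g y + g x|
      = |(g z - g y - (z - y) * deriv g y) + (g x - g y - (x - y) * deriv g y)
          + deriv g y * (z - 2 * y + x)| := by congr 1; ring
    _ ≤ L * (z - y) ^ 2 + L * (x - y) ^ 2 + |deriv g y| * |z - 2 * y + x| := by
      rw [← abs_mul]
      exact (abs_add_le _ _).trans (add_le_add_left ((abs_add_le _ _).trans (add_le_add hz hx)) _)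
    _ = _ := by ring

end SecondOrder

lemma SmoothData.differentiable {g : ℝ → ℝ} (hg : SmoothData g) : Differentiable ℝ g :=
  hg.1.differentiable (by norm_num)

lemma SmoothData.exists_lipschitzWith {g : ℝ → ℝ} (hg : SmoothData g) :
    ∃ K K' : NNReal, LipschitzWith K g ∧ (∀ x, |deriv g x| ≤ K) ∧ LipschitzWith K' (deriv g) := by
  have hgd := hg.differentiable
  obtain ⟨-, -, -, ⟨M, hM⟩, K', hK'⟩ := hg
  have hM' : ∀ x, |deriv g x| ≤ M.toNNReal := fun x => (hM x).trans (Real.le_coe_toNNReal M)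
  refine ⟨M.toNNReal, K', lipschitzWith_of_nnnorm_deriv_le hgd fun x => ?_, hM', hK'⟩
  rw [← NNReal.coe_le_coe, coe_nnnorm]
  exact hM' x

lemma LipschitzWith.tsum_abs_comp_average_le {β : ℝ → ℝ} {Kβ : NNReal} {α : ℝ} {v : ℤ → ℝ}
    (hβ : LipschitzWith Kβ β) (hβ0 : β 0 = 0) (hα : α ∈ Icc (0 : ℝ) 1) (hv : Summable v) :
    Summable (fun p => β (α * v p + (1 - α) * v (p + 1))) ∧
      ∑' p, |β (α * v p + (1 - α) * v (p + 1))| ≤ Kβ * ∑' p, |v p| := by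
  obtain ⟨hα₀, hα₁⟩ := hα
  have hmaj : HasSum (fun p => Kβ * (α * |v p| + (1 - α) * |v (p + 1)|)) (Kβ * ∑' p, |v p|) := by
    have h := ((hv.abs.hasSum.mul_left α).add
      ((hv.abs.hasSum.comp_add_right 1).mul_left (1 - α))).mul_left (Kβ : ℝ)
    rwa [← add_mul, add_sub_cancel, one_mul] at h
  have hle : ∀ p, |β (α * v p + (1 - α) * v (p + 1))|
      ≤ Kβ * (α * |v p| + (1 - α) * |v (p + 1)|) :=
    fun p => (hβ.abs_le_of_map_zero hβ0 _).trans <| mul_le_mul_of_nonneg_left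
      ((abs_add_le _ _).trans_eq (by rw [abs_mul, abs_mul, abs_of_nonneg hα₀,
        abs_of_nonneg (sub_nonneg.2 hα₁)])) Kβ.2
  have hb : Summable (fun p => β (α * v p + (1 - α) * v (p + 1))) :=
    hmaj.summable.of_norm_bounded hle
  exact ⟨hb, (hb.abs.tsum_le_tsum hle hmaj.summable).trans_eq hmaj.tsum_eq⟩

/-- `cdisc μ β Δx α v` is `discConv μ Δx b` for the density `b p = β (u_{p+1/2})`. -/
noncomputable def discConv (μ : ℝ → ℝ) (Δx : ℝ) (b : ℤ → ℝ) (j : ℤ) : ℝ :=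
  Δx * ∑' p, μ (((j - p : ℤ) : ℝ) * Δx + Δx / 2) * b p

section Convolution

variable {μ : ℝ → ℝ} {Mμ : ℝ} {Kμ Kμ' : NNReal} {Δx : ℝ} {b : ℤ → ℝ}

lemma hasSum_discConv (hμb : ∀ x, |μ x| ≤ Mμ) (hb : Summable b) (Δx : ℝ) (j : ℤ) :
    HasSum (fun p => Δx * (μ (((j - p : ℤ) : ℝ) * Δx + Δx / 2) * b p)) (discConv μ Δx b j) :=
  (hb.mul_of_abs_le fun _ => hμb _).hasSum.mul_left Δx

lemma abs_discConv_succ_sub_le (hμb : ∀ x, |μ x| ≤ Mμ) (hμ : LipschitzWith Kμ μ)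
    (hb : Summable b) (hΔx : 0 ≤ Δx) (i : ℤ) :
    |discConv μ Δx b (i + 1) - discConv μ Δx b i| ≤ Kμ * Δx ^ 2 * ∑' p, |b p| := by
  have h := (hasSum_discConv hμb hb Δx (i + 1)).sub (hasSum_discConv hμb hb Δx i)
  rw [← h.tsum_eq, ← Real.norm_eq_abs]
  refine (tsum_of_norm_bounded (hb.abs.hasSum.mul_left (Δx * (Kμ * Δx))) fun p => ?_).trans_eq
    (by ring)
  have hμp := hμ.abs_sub_le (((i + 1 - p : ℤ) : ℝ) * Δx + Δx / 2) (((i - p : ℤ) : ℝ) * Δx + Δx / 2)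
  rw [show ((i + 1 - p : ℤ) : ℝ) * Δx + Δx / 2 - (((i - p : ℤ) : ℝ) * Δx + Δx / 2) = Δx by
    push_cast; ring, abs_of_nonneg hΔx] at hμp
  rw [Real.norm_eq_abs, ← mul_sub, ← sub_mul, abs_mul, abs_mul, abs_of_nonneg hΔx, mul_assoc]
  gcongr

lemma abs_discConv_second_diff_le (hμb : ∀ x, |μ x| ≤ Mμ) (hμd : Differentiable ℝ μ)
    (hμ' : LipschitzWith Kμ' (deriv μ)) (hb : Summable b) (hΔx : 0 ≤ Δx) (i : ℤ) :
    |discConv μ Δx b (i + 1) - 2 * discConv μ Δx b i + discConv μ Δx b (i - 1)|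
      ≤ 2 * Kμ' * Δx ^ 3 * ∑' p, |b p| := by
  have h := ((hasSum_discConv hμb hb Δx (i + 1)).sub ((hasSum_discConv hμb hb Δx i).mul_left 2)).add
    (hasSum_discConv hμb hb Δx (i - 1))
  rw [← h.tsum_eq, ← Real.norm_eq_abs]
  refine (tsum_of_norm_bounded (hb.abs.hasSum.mul_left (Δx * (2 * Kμ' * Δx ^ 2)))
    fun p => ?_).trans_eq (by ring)
  set y : ℝ := ((i - p : ℤ) : ℝ) * Δx + Δx / 2
  have hy₁ : ((i + 1 - p : ℤ) : ℝ) * Δx + Δx / 2 = y + Δx := by simp only [y]; push_cast; ring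
  have hy₂ : ((i - 1 - p : ℤ) : ℝ) * Δx + Δx / 2 = y - Δx := by simp only [y]; push_cast; ring
  have hμp := abs_second_diff_le hμd hμ' (y - Δx) y (y + Δx)
  rw [show y + Δx - 2 * y + (y - Δx) = 0 by ring, abs_zero, mul_zero, add_zero] at hμp
  rw [hy₁, hy₂, Real.norm_eq_abs, show Δx * (μ (y + Δx) * b p) - 2 * (Δx * (μ y * b p))
    + Δx * (μ (y - Δx) * b p) = Δx * ((μ (y + Δx) - 2 * μ y + μ (y - Δx)) * b p) by ring,
    abs_mul, abs_mul, abs_of_nonneg hΔx, mul_assoc]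
  gcongr
  exact hμp.trans_eq (by ring)

end Convolution

lemma abs_cdisc_succ_sub_le {μ β : ℝ → ℝ} {Mμ : ℝ} {Kμ Kβ : NNReal} {Δx α : ℝ} {v : ℤ → ℝ}
    (hμb : ∀ x, |μ x| ≤ Mμ) (hμ : LipschitzWith Kμ μ) (hβ : LipschitzWith Kβ β) (hβ0 : β 0 = 0)
    (hα : α ∈ Icc (0 : ℝ) 1) (hv : Summable v) (hΔx : 0 ≤ Δx) (i : ℤ) :
    |cdisc μ β Δx α v (i + 1) - cdisc μ β Δx α v i| ≤ Kμ * Kβ * Δx ^ 2 * ∑' p, |v p| := by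
  obtain ⟨hb, hbS⟩ := hβ.tsum_abs_comp_average_le hβ0 hα hv
  calc _ ≤ Kμ * Δx ^ 2 * ∑' p, |β (α * v p + (1 - α) * v (p + 1))| :=
        abs_discConv_succ_sub_le hμb hμ hb hΔx i
    _ ≤ Kμ * Δx ^ 2 * (Kβ * ∑' p, |v p|) := by gcongr
    _ = _ := by ring

/-- The scheme with the convolution coefficients `n i = ν (c_{i+1/2})` frozen. -/
noncomputable def laxStep (θ lam : ℝ) (f : ℝ → ℝ) (n w : ℤ → ℝ) (i : ℤ) : ℝ :=
  (1 - θ) * w i + θ / 2 * (w (i + 1) + w (i - 1))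
    - lam / 2 * (n i * (f (w i) + f (w (i + 1))) - n (i - 1) * (f (w (i - 1)) + f (w i)))

noncomputable def discreteTV (w : ℤ → ℝ) : ℝ := ∑' i, |w (i + 1) - w i|

section LaxStep

variable {θ lam M : ℝ} {f : ℝ → ℝ} {K : NNReal} {n w : ℤ → ℝ}

lemma abs_mul_add_le (hf : LipschitzWith K f) (hf0 : f 0 = 0) {m : ℝ} (hm : |m| ≤ M) (a b : ℝ) :
    |m * (f a + f b)| ≤ M * (K * (|a| + |b|)) := by
  rw [abs_mul, mul_add]
  exact mul_le_mul hm ((abs_add_le _ _).trans (add_le_add (hf.abs_le_of_map_zero hf0 a)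
    (hf.abs_le_of_map_zero hf0 b))) (abs_nonneg _) ((abs_nonneg m).trans hm)

lemma laxStep_nonneg (hf : LipschitzWith K f) (hf0 : f 0 = 0) (hn : ∀ i, |n i| ≤ M)
    (hlam : 0 ≤ lam) (hθ₁ : lam * (K * M) ≤ θ) (hθ₂ : lam * (K * M) ≤ 1 - θ)
    (hw : ∀ i, 0 ≤ w i) (i : ℤ) : 0 ≤ laxStep θ lam f n w i := by
  have h₁ := abs_mul_add_le hf hf0 (hn i) (w i) (w (i + 1))
  have h₂ := abs_mul_add_le hf hf0 (hn (i - 1)) (w (i - 1)) (w i)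
  simp only [abs_of_nonneg (hw _)] at h₁ h₂
  have hflux : n i * (f (w i) + f (w (i + 1))) - n (i - 1) * (f (w (i - 1)) + f (w i))
      ≤ K * M * (w (i - 1) + 2 * w i + w (i + 1)) := by
    linarith [le_abs_self (n i * (f (w i) + f (w (i + 1)))),
      neg_abs_le (n (i - 1) * (f (w (i - 1)) + f (w i)))]
  unfold laxStep
  nlinarith [mul_le_mul_of_nonneg_left hflux hlam, mul_nonneg (sub_nonneg.2 hθ₂) (hw i),
    mul_nonneg (sub_nonneg.2 hθ₁) (hw (i + 1)), mul_nonneg (sub_nonneg.2 hθ₁) (hw (i - 1))]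

lemma hasSum_laxStep (hf : LipschitzWith K f) (hf0 : f 0 = 0) (hn : ∀ i, |n i| ≤ M) {S : ℝ}
    (hw : HasSum w S) : HasSum (laxStep θ lam f n w) S := by
  set H : ℤ → ℝ := fun i => n i * (f (w i) + f (w (i + 1)))
  have hH : Summable H :=
    ((hw.summable.abs.add (hw.summable.abs.comp_add_right 1)).mul_left (M * K)).of_norm_bounded
      fun i => (abs_mul_add_le hf hf0 (hn i) _ _).trans_eq (by ring)
  have h := ((hw.mul_left (1 - θ)).add (((hw.comp_add_right 1).add
    (hw.comp_sub_right 1)).mul_left (θ / 2))).sub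
    ((hH.hasSum.sub (hH.hasSum.comp_sub_right 1)).mul_left (lam / 2))
  rw [sub_self, mul_zero, sub_zero, ← two_mul, ← mul_assoc, div_mul_cancel₀ _ two_ne_zero,
    ← add_mul, sub_add_cancel, one_mul] at h
  exact h.congr_fun fun i => by simp only [laxStep, H, sub_add_cancel]

lemma abs_sub_add_abs_add_eq_of_cfl (hf : LipschitzWith K f) {m : ℝ} (hm : |m| ≤ M)
    (hlam : 0 ≤ lam) (hθ : lam * (K * M) ≤ θ) (a b : ℝ) :
    |θ / 2 * (b - a) - lam / 2 * m * (f b - f a)| + |θ / 2 * (b - a) + lam / 2 * m * (f b - f a)|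
      = θ * |b - a| := by
  have hM : 0 ≤ M := (abs_nonneg _).trans hm
  have hθ0 : 0 ≤ θ := (mul_nonneg hlam (mul_nonneg K.2 hM)).trans hθ
  refine (abs_sub_add_abs_add_of_abs_le ?_).trans ?_
  · rw [abs_mul, abs_mul, abs_mul, abs_of_nonneg (by linarith : 0 ≤ lam / 2),
      abs_of_nonneg (by linarith : 0 ≤ θ / 2)]
    calc lam / 2 * |m| * |f b - f a| ≤ lam / 2 * M * (K * |b - a|) :=
          mul_le_mul (mul_le_mul_of_nonneg_left hm (by linarith)) (hf.abs_sub_le _ _)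
            (abs_nonneg _) (by positivity)
      _ = lam * (K * M) / 2 * |b - a| := by ring
      _ ≤ θ / 2 * |b - a| := by gcongr
  · rw [abs_mul, abs_of_nonneg (by linarith : 0 ≤ θ / 2)]
    ring

lemma abs_flux_remainder_le (hf : LipschitzWith K f) (hf0 : f 0 = 0) {D₁ D₂ : ℝ}
    (hn₁ : ∀ i, |n (i + 1) - n i| ≤ D₁) (hn₂ : ∀ i, |n (i + 1) - 2 * n i + n (i - 1)| ≤ D₂)
    (i : ℤ) : |(n (i + 1) - n i) * f (w (i + 1)) - (n i - n (i - 1)) * f (w i)|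
      ≤ K * (D₂ * |w (i + 1)| + D₁ * |w (i + 1) - w i|) := by
  have h₁ := hn₁ (i - 1)
  rw [sub_add_cancel] at h₁
  have hD₂ := (abs_nonneg _).trans (hn₂ i)
  have hD₁ := (abs_nonneg _).trans h₁
  calc _ = |(n (i + 1) - 2 * n i + n (i - 1)) * f (w (i + 1))
        + (n i - n (i - 1)) * (f (w (i + 1)) - f (w i))| := by congr 1; ring
    _ ≤ D₂ * (K * |w (i + 1)|) + D₁ * (K * |w (i + 1) - w i|) := by
      refine (abs_add_le _ _).trans (add_le_add ?_ ?_) <;> rw [abs_mul] <;> gcongr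
      · exact hn₂ i
      · exact hf.abs_le_of_map_zero hf0 _
      · exact hf.abs_sub_le _ _
    _ = _ := by ring

end LaxStep

lemma tsum_abs_le_of_abs_le_add_shift {θ E : ℝ} {x v X Y e : ℤ → ℝ} (hx : Summable x)
    (hv : Summable v) (he : HasSum e E) (hXY : ∀ j, |X j| + |Y j| = θ * |v j|)
    (h : ∀ i, |x i| ≤ (1 - θ) * |v i| + |X (i + 1)| + |Y (i - 1)| + e i) :
    ∑' i, |x i| ≤ ∑' i, |v i| + E := by
  have hX : Summable fun j => |X j| := (hv.abs.mul_left θ).of_norm_bounded fun j => by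
    rw [Real.norm_eq_abs, abs_abs, ← hXY j]
    linarith [abs_nonneg (Y j)]
  have hY : Summable fun j => |Y j| := (hv.abs.mul_left θ).of_norm_bounded fun j => by
    rw [Real.norm_eq_abs, abs_abs, ← hXY j]
    linarith [abs_nonneg (X j)]
  have hXY' : ∑' j, |X j| + ∑' j, |Y j| = θ * ∑' j, |v j| := by
    rw [← hX.tsum_add hY, tsum_congr hXY, tsum_mul_left]
  refine (hasSum_le h hx.abs.hasSum (((hv.abs.hasSum.mul_left (1 - θ)).add
    (hX.hasSum.comp_add_right 1)).add (hY.hasSum.comp_sub_right 1) |>.add he)).trans_eq ?_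
  linear_combination hXY'

theorem discreteTV_laxStep_le {θ lam M D₁ D₂ : ℝ} {f : ℝ → ℝ} {K : NNReal} {n w : ℤ → ℝ}
    (hf : LipschitzWith K f) (hf0 : f 0 = 0) (hn : ∀ i, |n i| ≤ M)
    (hn₁ : ∀ i, |n (i + 1) - n i| ≤ D₁) (hn₂ : ∀ i, |n (i + 1) - 2 * n i + n (i - 1)| ≤ D₂)
    (hlam : 0 ≤ lam) (hθ₁ : lam * (K * M) ≤ θ) (hθ₂ : lam * (K * M) ≤ 1 - θ) (hw : Summable w) :
    discreteTV (laxStep θ lam f n w)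
      ≤ (1 + lam * K * D₁) * discreteTV w + lam * K * D₂ * ∑' i, |w i| := by
  have hKM : 0 ≤ lam * (K * M) := mul_nonneg hlam (mul_nonneg K.2 ((abs_nonneg _).trans (hn 0)))
  have hs := (hasSum_laxStep (θ := θ) (lam := lam) hf hf0 hn hw.hasSum).summable
  have hv : Summable fun j => w (j + 1) - w j := (hw.comp_add_right 1).sub hw
  set X : ℤ → ℝ := fun j => θ / 2 * (w (j + 1) - w j) - lam / 2 * n j * (f (w (j + 1)) - f (w j))
  set Y : ℤ → ℝ := fun j => θ / 2 * (w (j + 1) - w j) + lam / 2 * n j * (f (w (j + 1)) - f (w j))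
  refine (tsum_abs_le_of_abs_le_add_shift (X := X) (Y := Y) ((hs.comp_add_right 1).sub hs) hv
    ((((hw.abs.hasSum.comp_add_right 1).mul_left D₂).add (hv.abs.hasSum.mul_left D₁)).mul_left
      (K : ℝ) |>.mul_left lam) (fun j => abs_sub_add_abs_add_eq_of_cfl hf (hn j) hlam hθ₁ _ _)
    fun i => ?_).trans_eq (by unfold discreteTV; ring)
  have hid : laxStep θ lam f n w (i + 1) - laxStep θ lam f n w i
      = (1 - θ) * (w (i + 1) - w i) + X (i + 1) + Y (i - 1)
        - lam * ((n (i + 1) - n i) * f (w (i + 1)) - (n i - n (i - 1)) * f (w i)) := by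
    simp only [laxStep, X, Y, add_sub_cancel_right, sub_add_cancel]
    ring
  rw [hid]
  refine (abs_sub _ _).trans (add_le_add ((abs_add_three _ _ _).trans_eq ?_) ?_)
  · rw [abs_mul, abs_of_nonneg (hKM.trans hθ₂)]
  · rw [abs_mul, abs_of_nonneg hlam]
    exact mul_le_mul_of_nonneg_left (abs_flux_remainder_le hf hf0 hn₁ hn₂ i) hlam

lemma SchemeHyp.step_eq {f ν μ β u0 : ℝ → ℝ} {Δx Δt θ α : ℝ} {N : ℕ} {u : ℕ → ℤ → ℝ}
    (h : SchemeHyp f ν μ β u0 Δx Δt θ α N u) (hΔx : Δx ≠ 0) (hΔt : Δt ≠ 0) {k : ℕ} (hk : k < N) :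
    u (k + 1) = laxStep θ (Δt / Δx) f (fun i => ν (cdisc μ β Δx α (u k) i)) (u k) := by
  funext i
  rw [h.2 k hk i]
  simp only [Fnum, laxStep]
  field_simp
  ring

lemma abs_comp_cdisc_second_diff_le {ν μ β : ℝ → ℝ} {Mμ : ℝ} {Kν Kν' Kμ Kμ' Kβ : NNReal}
    {Δx α : ℝ} {v : ℤ → ℝ} (hνd : Differentiable ℝ ν) (hνd' : ∀ x, |deriv ν x| ≤ Kν)
    (hν' : LipschitzWith Kν' (deriv ν)) (hμb : ∀ x, |μ x| ≤ Mμ) (hμ : LipschitzWith Kμ μ)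
    (hμd : Differentiable ℝ μ) (hμ' : LipschitzWith Kμ' (deriv μ)) (hβ : LipschitzWith Kβ β)
    (hβ0 : β 0 = 0) (hα : α ∈ Icc (0 : ℝ) 1) (hv : Summable v) (hΔx : 0 ≤ Δx) (i : ℤ) :
    |ν (cdisc μ β Δx α v (i + 1)) - 2 * ν (cdisc μ β Δx α v i) + ν (cdisc μ β Δx α v (i - 1))|
      ≤ 2 * Kν' * (Kμ * Kβ * Δx ^ 2 * ∑' p, |v p|) ^ 2
        + 2 * Kν * Kμ' * Kβ * Δx ^ 3 * ∑' p, |v p| := by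
  obtain ⟨h₁, h₁'⟩ := abs_le.1 (abs_cdisc_succ_sub_le hμb hμ hβ hβ0 hα hv hΔx i)
  obtain ⟨h₂, h₂'⟩ := abs_le.1 (abs_cdisc_succ_sub_le hμb hμ hβ hβ0 hα hv hΔx (i - 1))
  rw [sub_add_cancel] at h₂ h₂'
  obtain ⟨hb, hbS⟩ := hβ.tsum_abs_comp_average_le hβ0 hα hv
  have h₃ : |cdisc μ β Δx α v (i + 1) - 2 * cdisc μ β Δx α v i + cdisc μ β Δx α v (i - 1)|
      ≤ 2 * Kμ' * Δx ^ 3 * (Kβ * ∑' p, |v p|) :=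
    (abs_discConv_second_diff_le hμb hμd hμ' hb hΔx i).trans (by gcongr)
  refine (abs_second_diff_le hνd hν' _ _ _).trans ?_
  calc _ ≤ Kν' * ((Kμ * Kβ * Δx ^ 2 * ∑' p, |v p|) ^ 2 + (Kμ * Kβ * Δx ^ 2 * ∑' p, |v p|) ^ 2)
        + Kν * (2 * Kμ' * Δx ^ 3 * (Kβ * ∑' p, |v p|)) := by
        gcongr _ * (?_ + ?_) + ?_ * ?_
        · exact sq_le_sq' (by linarith) (by linarith)
        · exact sq_le_sq' (by linarith) (by linarith)
        · exact hνd' _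
    _ = _ := by ring

theorem exists_discreteTV_laxStep_le {f ν β μ : ℝ → ℝ} {Lf : NNReal} {Mν m₀ : ℝ}
    (hf : LipschitzWith Lf f) (hf0 : f 0 = 0) (hν : SmoothData ν) (hνb : ∀ x, |ν x| ≤ Mν)
    (hβ : SmoothData β) (hβ0 : β 0 = 0) (hμ : SmoothData μ) (hm₀ : 0 ≤ m₀) :
    ∃ C, 0 ≤ C ∧ ∀ {Δx Δt θ α : ℝ} {v : ℤ → ℝ}, 0 < Δx → 0 ≤ Δt → α ∈ Icc (0 : ℝ) 1 →
      Δt / Δx * (Lf * Mν) ≤ θ → Δt / Δx * (Lf * Mν) ≤ 1 - θ → Summable v →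
      Δx * ∑' i, |v i| ≤ m₀ →
      discreteTV (laxStep θ (Δt / Δx) f (fun i => ν (cdisc μ β Δx α v i)) v)
        ≤ (1 + C * Δt) * discreteTV v + C * Δt := by
  obtain ⟨Kν, Kν', hνL, hνd', hν'⟩ := hν.exists_lipschitzWith
  obtain ⟨Kβ, -, hβL, -, -⟩ := hβ.exists_lipschitzWith
  obtain ⟨Kμ, Kμ', hμL, -, hμ'⟩ := hμ.exists_lipschitzWith
  obtain ⟨Mμ, hμb⟩ := hμ.2.1
  refine ⟨Lf * Kν * Kμ * Kβ * m₀ + 2 * Lf * (Kν' * (Kμ * Kβ) ^ 2 * m₀ ^ 3 + Kν * Kμ' * Kβ * m₀ ^ 2),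
    by positivity, fun {Δx Δt θ α v} hΔx hΔt hα hθ₁ hθ₂ hv hm => ?_⟩
  have hstep := discreteTV_laxStep_le hf hf0 (fun i => hνb _)
    (fun i => (hνL.abs_sub_le _ _).trans (mul_le_mul_of_nonneg_left
      (abs_cdisc_succ_sub_le hμb hμL hβL hβ0 hα hv hΔx.le i) Kν.2))
    (abs_comp_cdisc_second_diff_le hν.differentiable hνd' hν' hμb hμL hμ.differentiable hμ' hβL
      hβ0 hα hv hΔx.le) (div_nonneg hΔt hΔx.le) hθ₁ hθ₂ hv
  set S := ∑' i, |v i|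
  have hS : 0 ≤ S := tsum_nonneg fun _ => abs_nonneg _
  have hTV : 0 ≤ discreteTV v := tsum_nonneg fun _ => abs_nonneg _
  have h₁ : Δt / Δx * Lf * (Kν * (Kμ * Kβ * Δx ^ 2 * S)) ≤ Δt * (Lf * Kν * Kμ * Kβ * m₀) := by
    calc _ = Δt * (Lf * Kν * Kμ * Kβ * (Δx * S)) := by field_simp
      _ ≤ _ := by gcongr
  have h₂ : Δt / Δx * Lf * (2 * Kν' * (Kμ * Kβ * Δx ^ 2 * S) ^ 2
      + 2 * Kν * Kμ' * Kβ * Δx ^ 3 * S) * S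
      ≤ Δt * (2 * Lf * (Kν' * (Kμ * Kβ) ^ 2 * m₀ ^ 3 + Kν * Kμ' * Kβ * m₀ ^ 2)) := by
    calc _ = Δt * (2 * Lf * (Kν' * (Kμ * Kβ) ^ 2 * (Δx * S) ^ 3
          + Kν * Kμ' * Kβ * (Δx * S) ^ 2)) := by
          field_simp
      _ ≤ _ := by gcongr
  refine hstep.trans ?_
  have hA : 0 ≤ Δt * (Lf * Kν * Kμ * Kβ * m₀) := by positivity
  have hB : 0 ≤ Δt * (2 * Lf * (Kν' * (Kμ * Kβ) ^ 2 * m₀ ^ 3 + Kν * Kμ' * Kβ * m₀ ^ 2)) := by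
    positivity
  nlinarith [mul_le_mul_of_nonneg_right h₁ hTV, mul_nonneg hB hTV]

lemma cellAverages_nonneg_summable_mass_le {u0 : ℝ → ℝ} (hu0 : Integrable u0)
    (hu0pos : ∀ x, 0 ≤ u0 x) {Δx : ℝ} (hΔx : 0 < Δx) {u : ℤ → ℝ}
    (hu : ∀ i : ℤ, u i
      = (1 / Δx) * ∫ x in Ico ((i : ℝ) * Δx - Δx / 2) ((i : ℝ) * Δx + Δx / 2), u0 x) :
    (∀ i, 0 ≤ u i) ∧ Summable u ∧ Δx * ∑' i, u i ≤ ∫ x, u0 x := by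
  have hcell : ∀ i : ℤ,
      Δx * u i = ∫ x in Ico ((i : ℝ) * Δx - Δx / 2) ((i : ℝ) * Δx + Δx / 2), u0 x :=
    fun i => by rw [hu i]; field_simp
  have hdisj : Pairwise (Function.onFun Disjoint
      fun i : ℤ => Ico ((i : ℝ) * Δx - Δx / 2) ((i : ℝ) * Δx + Δx / 2)) := by
    convert pairwise_disjoint_Ico_add_zsmul (-(Δx / 2)) Δx using 3 with i
    simp only [zsmul_eq_mul, Int.cast_add, Int.cast_one]
    congr 1 <;> ring
  have h := hasSum_integral_iUnion (fun _ => measurableSet_Ico) hdisj hu0.integrableOn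
  simp_rw [← hcell] at h
  refine ⟨fun i => ?_, (summable_mul_left_iff hΔx.ne').1 h.summable, ?_⟩
  · rw [hu i]
    exact mul_nonneg (by positivity) (setIntegral_nonneg measurableSet_Ico fun x _ => hu0pos x)
  · rw [← tsum_mul_left, h.tsum_eq]
    exact setIntegral_le_integral hu0 (Filter.Eventually.of_forall hu0pos)

lemma lam_mul_le_of_cfl {θ lam K M : ℝ} (hlam : 0 ≤ lam) (hKM : 0 ≤ K * M)
    (h : lam ≤ min 1 (min (4 - 6 * θ) (6 * θ)) / (1 + 6 * K * M)) :
    lam * (K * M) ≤ θ ∧ lam * (K * M) ≤ 1 - θ := by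
  rw [le_div_iff₀ (by nlinarith)] at h
  have h₁ := h.trans ((min_le_right _ _).trans (min_le_left _ _))
  have h₂ := h.trans ((min_le_right _ _).trans (min_le_right _ _))
  constructor <;> nlinarith

lemma SchemeHyp.nonneg_hasSum {f ν μ β u0 : ℝ → ℝ} {Lf : NNReal} {Mν Δx Δt θ α : ℝ} {N : ℕ}
    {u : ℕ → ℤ → ℝ} (h : SchemeHyp f ν μ β u0 Δx Δt θ α N u) (hf : LipschitzWith Lf f)
    (hf0 : f 0 = 0) (hνb : ∀ x, |ν x| ≤ Mν) (hΔx : Δx ≠ 0) (hΔt : Δt ≠ 0) (hlam : 0 ≤ Δt / Δx)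
    (hθ₁ : Δt / Δx * (Lf * Mν) ≤ θ) (hθ₂ : Δt / Δx * (Lf * Mν) ≤ 1 - θ)
    (h0 : ∀ i, 0 ≤ u 0 i) (hs : Summable (u 0)) :
    ∀ k ≤ N, (∀ i, 0 ≤ u k i) ∧ HasSum (u k) (∑' i, u 0 i) := by
  intro k
  induction k with
  | zero => exact fun _ => ⟨h0, hs.hasSum⟩
  | succ k ih =>
    intro hk
    obtain ⟨hpos, hsum⟩ := ih (by omega)
    rw [h.step_eq hΔx hΔt hk]
    exact ⟨laxStep_nonneg hf hf0 (fun _ => hνb _) hlam hθ₁ hθ₂ hpos,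
      hasSum_laxStep hf hf0 (fun _ => hνb _) hsum⟩

theorem stmt5_general (f ν β μ : ℝ → ℝ) (Lf : NNReal) (Mν : ℝ)
    (hf : LipschitzWith Lf f) (hf0 : f 0 = 0)
    (hν : SmoothData ν) (hνb : ∀ x, |ν x| ≤ Mν)
    (hβ : SmoothData β) (hβ0 : β 0 = 0)
    (hμ : SmoothData μ)
    (T : ℝ)
    (u0 : ℝ → ℝ) (hu0 : Integrable u0)
    (hu0pos : ∀ x, 0 ≤ u0 x) :
    ∃ L₂ : ℝ, 0 < L₂ ∧
      ∀ (Δx Δt θ αc : ℝ) (N : ℕ) (u : ℕ → ℤ → ℝ),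
        0 < Δx → 0 < Δt → T = N * Δt →
        θ ∈ Set.Ioo (0 : ℝ) (2 / 3) → αc ∈ Set.Icc (0 : ℝ) 1 →
        Δt / Δx ≤ min 1 (min (4 - 6 * θ) (6 * θ)) / (1 + 6 * (Lf : ℝ) * Mν) →
        SchemeHyp f ν μ β u0 Δx Δt θ αc N u →
        ∀ n ≤ N,
          (∑' i : ℤ, |u n (i + 1) - u n i|)
            ≤ Real.exp (L₂ * T) * ((∑' i : ℤ, |u 0 (i + 1) - u 0 i|) + L₂) := by
  obtain ⟨C, hC, hstep⟩ :=
    exists_discreteTV_laxStep_le hf hf0 hν hνb hβ hβ0 hμ (integral_nonneg hu0pos : 0 ≤ ∫ x, u0 x)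
  refine ⟨C + 1, by linarith, fun Δx Δt θ α N u hΔx hΔt hT _ hα hCFL hu n hn => ?_⟩
  have hlam : 0 ≤ Δt / Δx := by positivity
  obtain ⟨hθ₁, hθ₂⟩ := lam_mul_le_of_cfl hlam (mul_nonneg Lf.2 ((abs_nonneg _).trans (hνb 0))) hCFL
  obtain ⟨h0, hs, hmass⟩ := cellAverages_nonneg_summable_mass_le hu0 hu0pos hΔx hu.1
  have hinv := hu.nonneg_hasSum hf hf0 hνb hΔx.ne' hΔt.ne' hlam hθ₁ hθ₂ h0 hs
  have hTV0 : 0 ≤ discreteTV (u 0) := tsum_nonneg fun _ => abs_nonneg _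
  have hgrowth := add_one_le_exp_mul_of_le_one_add_mul_add (x := fun k => discreteTV (u k))
    (a := C * Δt) (by positivity) hTV0 (fun k hk => ?_) hn
  · have hexp : Real.exp (n * (C * Δt)) ≤ Real.exp ((C + 1) * T) := by
      rw [Real.exp_le_exp, hT]
      have : (n : ℝ) * Δt ≤ N * Δt := by gcongr
      nlinarith
    show discreteTV (u n) ≤ Real.exp ((C + 1) * T) * (discreteTV (u 0) + (C + 1))
    calc _ ≤ Real.exp (n * (C * Δt)) * (discreteTV (u 0) + 1) := by linarith [hgrowth]
      _ ≤ Real.exp ((C + 1) * T) * (discreteTV (u 0) + (C + 1)) :=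
        mul_le_mul hexp (by linarith) (by positivity) (Real.exp_pos _).le
  · obtain ⟨hpos, hsum⟩ := hinv k hk.le
    rw [hu.step_eq hΔx.ne' hΔt.ne' hk]
    refine hstep hΔx hΔt.le hα hθ₁ hθ₂ hsum.summable ?_
    simpa only [abs_of_nonneg (hpos _), hsum.tsum_eq] using hmass

/-- BV estimate: there is `L₂ > 0` depending only on `f, ν, β, μ, ‖u₀‖_{L¹}, T`
(but not on `Δx, Δt`) such that
`Σ_i |u^n_{i+1} − u^n_i| ≤ exp(L₂ T)(Σ_i |u⁰_{i+1} − u⁰_i| + L₂)` for `0 ≤ n ≤ N`. -/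
theorem stmt5 (f ν β μ : ℝ → ℝ) (Lf : NNReal) (Mν : ℝ)
    (hf : LipschitzWith Lf f) (hf0 : f 0 = 0)
    (hν : SmoothData ν) (hν0 : ν 0 = 0) (hνb : ∀ x, |ν x| ≤ Mν)
    (hβ : SmoothData β) (hβ0 : β 0 = 0)
    (hμ : SmoothData μ)
    (T : ℝ) (hT : 0 < T)
    (u0 : ℝ → ℝ) (hu0 : Integrable u0) (hu0bv : BoundedVariationOn u0 Set.univ)
    (hu0pos : ∀ x, 0 ≤ u0 x) :
    ∃ L₂ : ℝ, 0 < L₂ ∧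
      ∀ (Δx Δt θ αc : ℝ) (N : ℕ) (u : ℕ → ℤ → ℝ),
        0 < Δx → 0 < Δt → T = N * Δt →
        θ ∈ Set.Ioo (0 : ℝ) (2 / 3) → αc ∈ Set.Icc (0 : ℝ) 1 →
        Δt / Δx ≤ min 1 (min (4 - 6 * θ) (6 * θ)) / (1 + 6 * (Lf : ℝ) * Mν) →
        SchemeHyp f ν μ β u0 Δx Δt θ αc N u →
        ∀ n ≤ N,
          (∑' i : ℤ, |u n (i + 1) - u n i|)
            ≤ Real.exp (L₂ * T) * ((∑' i : ℤ, |u 0 (i + 1) - u 0 i|) + L₂) :=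
  stmt5_general f ν β μ Lf Mν hf hf0 hν hνb hβ hβ0 hμ T u0 hu0 hu0pos
end

section
/- (Quadrature error for the discrete convolution.) Let Δx > 0, x_p = pΔx, C_p = [x_{p−1/2}, x_{p+1/2}) with x_{p±1/2} = (p ± 1/2)Δx, and let w : ℝ → ℝ be the piecewise constant function w = Σ_{p∈ℤ} w_p χ_{C_p} with Δx Σ_{p∈ℤ} |w_p| < ∞. Then for every z ∈ ℝ: | ∫_ℝ μ(z − y) w(y) dy − Δx Σ_{p∈ℤ} μ(z − x_p) w_p | ≤ Lip(μ) ( Δx Σ_{p∈ℤ} |w_p| ) Δx. -/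
/-!
On the cell `C_p = [x_p - Δx/2, x_p + Δx/2)` the step function `w` is the constant `w_p`, so the
integral splits as `Σ_p w_p ∫_{C_p} μ(z - y) dy`, while `Δx μ(z - x_p) w_p` is the integral over
`C_p` of the constant `μ(z - x_p) w_p`. As `|y - x_p| ≤ Δx/2` on `C_p`, the cellwise error is at
most `Lip(μ) (Δx/2) Δx |w_p|`, and summing over `p` gives the bound (with a spare factor `1/2`).
Boundedness of `μ` makes both series converge absolutely.
-/

open MeasureTheory Set Metric Function

theorem hasSum_setIntegral_of_partition {X E ι : Type*} [MeasurableSpace X] {μ : Measure X}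
    [NormedAddCommGroup E] [NormedSpace ℝ E] [Countable ι] {f : X → E} {s : ι → Set X}
    (hm : ∀ i, MeasurableSet (s i)) (hd : Pairwise (Disjoint on s)) (hcover : ⋃ i, s i = univ)
    (hi : ∀ i, IntegrableOn f (s i) μ) (h : Summable fun i => ∫ x in s i, ‖f x‖ ∂μ) :
    HasSum (fun i => ∫ x in s i, f x ∂μ) (∫ x, f x ∂μ) := by
  have := hasSum_integral_iUnion hm hd (integrableOn_iUnion_of_summable_integral_norm hi h)
  rwa [hcover, Measure.restrict_univ] at this

theorem LipschitzWith.norm_setIntegral_sub_measureReal_smul_le {X E : Type*} [MeasurableSpace X]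
    [PseudoMetricSpace X] {μ : Measure X} [NormedAddCommGroup E] [NormedSpace ℝ E] [CompleteSpace E]
    {f : X → E} {L : NNReal} {s : Set X} {c : X} {r : ℝ} (hf : LipschitzWith L f)
    (hs : μ s < ⊤) (hsr : s ⊆ closedBall c r) (hint : IntegrableOn f s μ) :
    ‖(∫ x in s, f x ∂μ) - μ.real s • f c‖ ≤ L * r * μ.real s := by
  rw [← setIntegral_const, ← integral_sub hint (integrableOn_const hs.ne)]
  refine norm_setIntegral_le_of_norm_le_const hs fun x hx => ?_
  calc ‖f x - f c‖ = dist (f x) (f c) := (dist_eq_norm _ _).symm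
    _ ≤ L * dist x c := hf.dist_le_mul x c
    _ ≤ L * r := by gcongr; exact hsr hx

def cell (h : ℝ) (p : ℤ) : Set ℝ := Ico (p * h - h / 2) (p * h + h / 2)

section Cells

variable {h : ℝ}

theorem floor_div_add_half_eq_iff_mem_cell (hh : 0 < h) {y : ℝ} {p : ℤ} :
    ⌊y / h + 1 / 2⌋ = p ↔ y ∈ cell h p := by
  rw [Int.floor_eq_iff, cell, mem_Ico, ← sub_le_iff_le_add, ← lt_sub_iff_add_lt, le_div_iff₀ hh,
    div_lt_iff₀ hh]
  constructor <;> rintro ⟨h1, h2⟩ <;> constructor <;> linarith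

theorem measurableSet_cell (p : ℤ) : MeasurableSet (cell h p) := measurableSet_Ico

theorem pairwise_disjoint_cell (hh : 0 < h) : Pairwise (Disjoint on cell h) :=
  fun _ _ hpq => disjoint_left.2 fun _ hp hq => hpq <|
    ((floor_div_add_half_eq_iff_mem_cell hh).2 hp).symm.trans
      ((floor_div_add_half_eq_iff_mem_cell hh).2 hq)

theorem iUnion_cell (hh : 0 < h) : ⋃ p, cell h p = univ :=
  eq_univ_of_forall fun _ => mem_iUnion.2 ⟨_, (floor_div_add_half_eq_iff_mem_cell hh).1 rfl⟩

theorem volume_cell (p : ℤ) : volume (cell h p) = ENNReal.ofReal h := by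
  rw [cell, Real.volume_Ico]; ring_nf

theorem volume_real_cell (hh : 0 ≤ h) (p : ℤ) : volume.real (cell h p) = h := by
  rw [measureReal_def, volume_cell, ENNReal.toReal_ofReal hh]

theorem cell_subset_closedBall (p : ℤ) : cell h p ⊆ closedBall (p * h) (h / 2) := by
  rw [Real.closedBall_eq_Icc]; exact Ico_subset_Icc_self

end Cells

theorem hasSum_setIntegral_cell_mul {g : ℝ → ℝ} {M h : ℝ} {w : ℤ → ℝ} (hg : Continuous g)
    (hgM : ∀ x, |g x| ≤ M) (hh : 0 < h) (hw : Summable fun p => |w p|) :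
    HasSum (fun p => (∫ y in cell h p, g y) * w p) (∫ y, g y * w ⌊y / h + 1 / 2⌋) := by
  have hcell : ∀ p, EqOn (fun y => g y * w ⌊y / h + 1 / 2⌋) (fun y => g y * w p) (cell h p) :=
    fun p y hy => by simp only [(floor_div_add_half_eq_iff_mem_cell hh).2 hy]
  have hint : ∀ p, IntegrableOn (fun y => g y * w p) (cell h p) := fun p =>
    (hg.mul continuous_const).integrableOn_Icc.mono_set Ico_subset_Icc_self
  have hnorm : ∀ p, ∫ y in cell h p, ‖g y * w ⌊y / h + 1 / 2⌋‖ ≤ M * h * |w p| := fun p =>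
    calc ∫ y in cell h p, ‖g y * w ⌊y / h + 1 / 2⌋‖ ≤ ‖∫ y in cell h p, ‖g y * w p‖‖ := by
          rw [setIntegral_congr_fun (measurableSet_cell p) fun y hy => congrArg norm (hcell p hy)]
          exact Real.le_norm_self _
      _ ≤ M * |w p| * volume.real (cell h p) := by
          refine norm_setIntegral_le_of_norm_le_const (by simp [volume_cell]) fun y _ => ?_
          rw [norm_norm, Real.norm_eq_abs, abs_mul]
          gcongr
          exact hgM y
      _ = M * h * |w p| := by rw [volume_real_cell hh.le]; ring
  have hsum := hasSum_setIntegral_of_partition measurableSet_cell (pairwise_disjoint_cell hh)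
    (iUnion_cell hh) (fun p => (hint p).congr_fun (hcell p).symm (measurableSet_cell p))
    (.of_nonneg_of_le (fun _ => integral_nonneg fun _ => norm_nonneg _) hnorm
      (hw.mul_left (M * h)))
  have hterm : ∀ p, (∫ y in cell h p, g y) * w p = ∫ y in cell h p, g y * w ⌊y / h + 1 / 2⌋ :=
    fun p => by rw [setIntegral_congr_fun (measurableSet_cell p) (hcell p), integral_mul_const]
  simpa only [hterm] using hsum

/-- Quadrature error for the discrete convolution: for the piecewise constant
function `w = Σ_p w_p χ_{C_p}` (with cells `C_p = [pΔx − Δx/2, pΔx + Δx/2)`, so that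
`w(y) = w_{⌊y/Δx + 1/2⌋}`) and every `z ∈ ℝ`,
`|∫ μ(z − y) w(y) dy − Δx Σ_p μ(z − x_p) w_p| ≤ Lip(μ) (Δx Σ_p |w_p|) Δx`. -/
theorem stmt15 (μ : ℝ → ℝ) (Lμ : NNReal) (Mμ : ℝ)
    (hμLip : LipschitzWith Lμ μ) (hμb : ∀ x, |μ x| ≤ Mμ)
    (Δx : ℝ) (hΔx : 0 < Δx) (wp : ℤ → ℝ) (hw : Summable fun p : ℤ => |wp p|)
    (z : ℝ) :
    |(∫ y : ℝ, μ (z - y) * wp ⌊y / Δx + 1 / 2⌋)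
        - Δx * ∑' p : ℤ, μ (z - (p : ℝ) * Δx) * wp p|
      ≤ (Lμ : ℝ) * (Δx * ∑' p : ℤ, |wp p|) * Δx := by
  have hLip : LipschitzWith Lμ fun y => μ (z - y) := by
    simpa [comp_def] using hμLip.comp (IsometryEquiv.subLeft z).isometry.lipschitz
  have hintegral := hasSum_setIntegral_cell_mul hLip.continuous (fun y => hμb (z - y)) hΔx hw
  have hquadrature : HasSum (fun p : ℤ => Δx * (μ (z - p * Δx) * wp p))
      (Δx * ∑' p : ℤ, μ (z - p * Δx) * wp p) :=
    ((hw.mul_left Mμ).of_norm_bounded fun p => by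
      rw [Real.norm_eq_abs, abs_mul]; gcongr; exact hμb _).hasSum.mul_left Δx
  have hcell : ∀ p : ℤ, ‖(∫ y in cell Δx p, μ (z - y)) * wp p - Δx * (μ (z - p * Δx) * wp p)‖
      ≤ Lμ * (Δx / 2) * Δx * |wp p| := fun p => by
    have := hLip.norm_setIntegral_sub_measureReal_smul_le (μ := volume) (s := cell Δx p)
      (by simp [volume_cell]) (cell_subset_closedBall p) (hLip.continuous.integrableOn_Icc.mono_set Ico_subset_Icc_self)
    rw [volume_real_cell hΔx.le, smul_eq_mul] at this
    rw [← mul_assoc, ← sub_mul, norm_mul, Real.norm_eq_abs (wp p)]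
    gcongr
  calc _ = ‖∑' p : ℤ, ((∫ y in cell Δx p, μ (z - y)) * wp p - Δx * (μ (z - p * Δx) * wp p))‖ := by
        rw [(hintegral.sub hquadrature).tsum_eq, Real.norm_eq_abs]
    _ ≤ Lμ * (Δx / 2) * Δx * ∑' p : ℤ, |wp p| :=
        tsum_of_norm_bounded (hw.hasSum.mul_left _) hcell
    _ ≤ (Lμ : ℝ) * (Δx * ∑' p : ℤ, |wp p|) * Δx := by
        have : 0 ≤ Lμ * Δx * Δx * ∑' p : ℤ, |wp p| := by positivity
        linarith
end

section
/- (Consistency of the Lax–Friedrichs numerical entropy flux.) Fix λ > 0, θ ∈ (0, 2/3) and a real number ν̂ with |ν̂| ≤ ‖ν‖_∞. Define F(a,b) = ν̂ (f(a) + f(b))/2 − θ (b − a)/(2λ), 𝒢(a,b,k) = F(a ∨ k, b ∨ k) − F(a ∧ k, b ∧ k), and p(a,k) = sgn(a − k)(f(a) − f(k)). Then there exists a constant C₁ depending only on Lip(f), ‖ν‖_∞, θ and λ such that for all a, b, k ∈ ℝ: | 𝒢(a, b, k) − ν̂ p(a, k) | ≤ C₁ |b − a|. -/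
/-!
Since `sgn(a − k)(f a − f k) = f(a ∨ k) − f(a ∧ k)`, the consistency error
`𝒢(a, b, k) − ν̂ p(a, k)` is the increment `φ b − φ a` of
`φ x = ν̂ (f(x ∨ k) − f(x ∧ k))/2 − θ (x ∨ k − x ∧ k)/(2λ)`,
and `φ` is Lipschitz with constant `|ν̂| Lip(f) + |θ/λ|` because `x ↦ x ∨ k` and `x ↦ x ∧ k` are
`1`-Lipschitz.
-/

lemma sign_sub_mul_sub_eq_max_sub_min (f : ℝ → ℝ) (a k : ℝ) :
    Real.sign (a - k) * (f a - f k) = f (max a k) - f (min a k) := by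
  rcases lt_trichotomy a k with h | rfl | h
  · rw [max_eq_right h.le, min_eq_left h.le, Real.sign_of_neg (sub_neg.2 h)]
    ring
  · simp
  · rw [max_eq_left h.le, min_eq_right h.le, Real.sign_of_pos (sub_pos.2 h)]
    ring

lemma LipschitzWith.comp_max_const_sub_comp_min_const {f : ℝ → ℝ} {K : NNReal}
    (hf : LipschitzWith K f) (k : ℝ) :
    LipschitzWith (K + K) fun x => f (max x k) - f (min x k) := by
  simpa using (hf.comp (LipschitzWith.id.max_const k)).sub (hf.comp (LipschitzWith.id.min_const k))

lemma abs_laxFriedrichs_potential_sub_le {f : ℝ → ℝ} {K : NNReal} (hf : LipschitzWith K f)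
    (ν θ lam k a b : ℝ) :
    |(ν * (f (max b k) - f (min b k)) / 2 - θ * (max b k - min b k) / (2 * lam))
      - (ν * (f (max a k) - f (min a k)) / 2 - θ * (max a k - min a k) / (2 * lam))|
      ≤ (|ν| * K + |θ / lam|) * |b - a| := by
  have hφ := ((lipschitzWith_smul (ν / 2)).comp (hf.comp_max_const_sub_comp_min_const k)).sub
    ((lipschitzWith_smul (θ / (2 * lam))).comp
      ((LipschitzWith.id.max_const k).sub (LipschitzWith.id.min_const k)))
  have hba := hφ.dist_le_mul b a
  simp only [Function.comp_apply, smul_eq_mul, id, Real.dist_eq] at hba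
  convert hba using 2
  · ring
  · push_cast
    simp only [Real.norm_eq_abs, abs_div, abs_mul, abs_two]
    ring

theorem stmt18_general (f : ℝ → ℝ) (Lf : NNReal) (Mν : ℝ)
    (hf : LipschitzWith Lf f)
    (lam θ : ℝ) :
    ∃ C₁ : ℝ, ∀ νh : ℝ, |νh| ≤ Mν → ∀ a b k : ℝ,
      |(νh * (f (max a k) + f (max b k)) / 2 - θ * (max b k - max a k) / (2 * lam)
          - (νh * (f (min a k) + f (min b k)) / 2 - θ * (min b k - min a k) / (2 * lam)))
        - νh * (Real.sign (a - k) * (f a - f k))|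
      ≤ C₁ * |b - a| := by
  refine ⟨Mν * Lf + |θ / lam|, fun νh hνh a b k => ?_⟩
  calc _ = |(νh * (f (max b k) - f (min b k)) / 2 - θ * (max b k - min b k) / (2 * lam))
          - (νh * (f (max a k) - f (min a k)) / 2 - θ * (max a k - min a k) / (2 * lam))| := by
        rw [sign_sub_mul_sub_eq_max_sub_min]
        congr 1
        ring
    _ ≤ (|νh| * Lf + |θ / lam|) * |b - a| := abs_laxFriedrichs_potential_sub_le hf νh θ lam k a b
    _ ≤ (Mν * Lf + |θ / lam|) * |b - a| := by gcongr

/-- Consistency of the Lax–Friedrichs numerical entropy flux: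
with `F(a,b) = ν̂ (f(a)+f(b))/2 − θ(b−a)/(2λ)`,
`𝒢(a,b,k) = F(a∨k, b∨k) − F(a∧k, b∧k)` and `p(a,k) = sgn(a−k)(f(a)−f(k))`,
there is `C₁ = C₁(Lip(f), ‖ν‖_∞, θ, λ)` with `|𝒢(a,b,k) − ν̂ p(a,k)| ≤ C₁ |b−a|`
for every `ν̂` with `|ν̂| ≤ ‖ν‖_∞` and all `a, b, k`. -/
theorem stmt18 (f ν : ℝ → ℝ) (Lf : NNReal) (Mν : ℝ)
    (hf : LipschitzWith Lf f) (hf0 : f 0 = 0) (hνb : ∀ x, |ν x| ≤ Mν)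
    (lam θ : ℝ) (hlam : 0 < lam) (hθ : θ ∈ Set.Ioo (0 : ℝ) (2 / 3)) :
    ∃ C₁ : ℝ, ∀ νh : ℝ, |νh| ≤ Mν → ∀ a b k : ℝ,
      |(νh * (f (max a k) + f (max b k)) / 2 - θ * (max b k - max a k) / (2 * lam)
          - (νh * (f (min a k) + f (min b k)) / 2 - θ * (min b k - min a k) / (2 * lam)))
        - νh * (Real.sign (a - k) * (f a - f k))|
      ≤ C₁ * |b - a| :=
  stmt18_general f Lf Mν hf lam θ
end
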